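/- arXiv:2308.13255 — 2 statements merged into one kernel-verified Lean document; each statement's English description precedes it below -/
import Mathlib

section
/- For all r ≥ 2, k ≥ 2, 1 ≤ ℓ ≤ k-1 and all n of the form n = ℓ + m(k-ℓ) with m ≥ 1: R_r(P_n^{(k,ℓ)}) > (r-1)·⌈(n-ℓ)/((k-ℓ)·⌈k/(k-ℓ)⌉)⌉ + n − r ≥ (1 + (r-1)/((k-ℓ)·⌈k/(k-ℓ)⌉))·n − 2r + 1. In particular, when (k-ℓ) divides k, R_r(P_n^{(k,ℓ)}) > ((r-1+k)/k)·n − 2r + 1, and when 1 ≤ ℓ ≤ k/2, R_r(P_n^{(k,ℓ)}) > ((r-1+2(k-ℓ))/(2(k-ℓ)))·n − 2r + 1. -/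
open Finset

/-- A `k`-uniform hypergraph, given by its (finite) edge set; vertices are natural numbers. -/
def IsUniform (k : ℕ) (G : Finset (Finset ℕ)) : Prop :=
  ∀ e ∈ G, e.card = k

/-- The vertex set of a hypergraph. -/
def hVerts (G : Finset (Finset ℕ)) : Finset ℕ := G.biUnion id

/-- `G` contains a copy of `H`, i.e. a subgraph isomorphic to `H`. -/
def IsCopy (H G : Finset (Finset ℕ)) : Prop :=
  ∃ f : ℕ → ℕ, Set.InjOn f ↑(hVerts H) ∧ ∀ e ∈ H, e.image f ∈ G

/-- `G →_r H`: every `r`-coloring of the edges of `G` yields a monochromatic copy of `H`. -/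
def Arrows (r : ℕ) (G H : Finset (Finset ℕ)) : Prop :=
  ∀ χ : Finset ℕ → Fin r, ∃ c : Fin r, IsCopy H (G.filter fun e => χ e = c)

/-- The `r`-color size-Ramsey number of `H`: the minimum number of edges of a
`k`-uniform hypergraph `G` with `G →_r H`. -/
noncomputable def sizeRamsey (k r : ℕ) (H : Finset (Finset ℕ)) : ℕ :=
  sInf {m | ∃ G : Finset (Finset ℕ), IsUniform k G ∧ Arrows r G H ∧ G.card = m}

/-- The `r`-color Ramsey number of `H`: the minimum number of vertices of a
`k`-uniform hypergraph `G` with `G →_r H`. -/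
noncomputable def vertexRamsey (k r : ℕ) (H : Finset (Finset ℕ)) : ℕ :=
  sInf {m | ∃ G : Finset (Finset ℕ), IsUniform k G ∧ Arrows r G H ∧ (hVerts G).card = m}

/-- The `(k,ℓ)`-path with `m` edges: edge `i` (for `0 ≤ i < m`) is
`{i(k-ℓ), i(k-ℓ)+1, …, i(k-ℓ)+k-1}`. -/
def pathWithEdges (k l m : ℕ) : Finset (Finset ℕ) :=
  (Finset.range m).image fun i => (Finset.range k).image fun j => i * (k - l) + j

/-- The `(k,ℓ)`-path on `n` vertices, `P_n^{(k,ℓ)}`; it has `(n-ℓ)/(k-ℓ)` edges. -/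
def hPath (k l n : ℕ) : Finset (Finset ℕ) :=
  pathWithEdges k l ((n - l) / (k - l))

/-! Let `d = ⌈k/(k-ℓ)⌉`, the maximum degree of the path, and `q = ⌈m/d⌉`. Given a host `G` on
fewer than `(r-1)(q-1) + n` vertices, list its vertices in increasing order, cut the list into
`r - 1` blocks of `q - 1` vertices followed by a remainder, and color an edge by the block of its
least vertex. In a monochromatic path of one of the first `r - 1` colors the least vertices of
all `m` edges lie in one block, and each vertex is least in at most `d` path edges, so
`m ≤ d(q-1)`, which is impossible; a path of the last color has all its `n` vertices in the
remainder, which is too small. That the Ramsey number is an infimum over a nonempty set is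
Ramsey's theorem for `k`-sets, via the Erdős–Rado argument. -/

section Ramsey

variable {α C : Type*} [LinearOrder α]

def IsHomogeneous (χ : Finset α → C) (k : ℕ) (S : Finset α) : Prop :=
  ∃ c, ∀ t ⊆ S, #t = k → χ t = c

/-- `A` is built greedily: take the least element `a` of `X`, pass to a homogeneous subset of the
rest for the coloring `t ↦ χ (insert a t)` of `k`-sets, and recurse inside it. -/
lemma exists_color_eq_min'
    (hk : ∀ n, ∃ N, ∀ (χ : Finset α → C) (X : Finset α), N ≤ #X →
      ∃ S ⊆ X, #S = n ∧ IsHomogeneous χ k S) (j : ℕ) :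
    ∃ N, ∀ (χ : Finset α → C) (X : Finset α), N ≤ #X → ∃ A ⊆ X, #A = j ∧
      ∃ col : α → C, ∀ t ⊆ A, #t = k + 1 → ∀ ht : t.Nonempty, χ t = col (t.min' ht) := by
  induction j with
  | zero =>
    exact ⟨0, fun χ X _ => ⟨∅, empty_subset _, rfl, fun _ => χ ∅, fun t ht _ hne => by
      simp [subset_empty.1 ht] at hne⟩⟩
  | succ j ih =>
    obtain ⟨Nj, hNj⟩ := ih
    obtain ⟨F, hF⟩ := hk Nj
    refine ⟨F + 1, fun χ X hX => ?_⟩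
    have hXne : X.Nonempty := card_pos.1 (by omega)
    set a := X.min' hXne
    have haX : a ∈ X := X.min'_mem hXne
    obtain ⟨Y, hYX, hYcard, c, hc⟩ := hF (fun t => χ (insert a t)) (X.erase a)
      (by rw [card_erase_of_mem haX]; omega)
    obtain ⟨A, hAY, hAcard, col, hcol⟩ := hNj χ Y hYcard.ge
    have hAX : A ⊆ X.erase a := hAY.trans hYX
    have haA : a ∉ A := fun h => by simpa using hAX h
    have ha_lt : ∀ b ∈ A, a < b := fun b hb =>
      lt_of_le_of_ne (X.min'_le b (mem_of_mem_erase (hAX hb))) (ne_of_mem_erase (hAX hb)).symm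
    refine ⟨insert a A, insert_subset haX (hAX.trans (erase_subset _ _)),
      by rw [card_insert_of_notMem haA, hAcard], Function.update col a c, ?_⟩
    intro t ht htcard hne
    by_cases hat : a ∈ t
    · have hmin : t.min' hne = a := le_antisymm (t.min'_le a hat) <| le_min' _ _ _ fun b hb => by
        rcases mem_insert.1 (ht hb) with rfl | hb
        exacts [le_rfl, (ha_lt b hb).le]
      have hsub : t.erase a ⊆ Y := fun x hx => by
        rcases mem_insert.1 (ht (mem_of_mem_erase hx)) with rfl | hx'
        exacts [absurd rfl (ne_of_mem_erase hx), hAY hx']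
      have : χ (insert a (t.erase a)) = c := hc _ hsub (by rw [card_erase_of_mem hat, htcard]; rfl)
      rw [insert_erase hat] at this
      rw [hmin, this, Function.update_self]
    · have htA : t ⊆ A := fun x hx => by
        rcases mem_insert.1 (ht hx) with rfl | hx'
        exacts [absurd hx hat, hx']
      have hmin : t.min' hne ≠ a := fun h => hat (h ▸ t.min'_mem hne)
      rw [Function.update_of_ne hmin]
      exact hcol t htA htcard hne

theorem exists_isHomogeneous [Fintype C] (k n : ℕ) :
    ∃ N, ∀ (χ : Finset α → C) (X : Finset α), N ≤ #X →
      ∃ S ⊆ X, #S = n ∧ IsHomogeneous χ k S := by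
  classical
  induction k generalizing n with
  | zero =>
    refine ⟨n, fun χ X hX => ?_⟩
    obtain ⟨S, hSX, hS⟩ := exists_subset_card_eq hX
    exact ⟨S, hSX, hS, χ ∅, fun t _ ht => by rw [card_eq_zero.1 ht]⟩
  | succ k ih =>
    obtain ⟨N, hN⟩ := exists_color_eq_min' ih (Fintype.card C * n + 1)
    refine ⟨N, fun χ X hX => ?_⟩
    obtain ⟨A, hAX, hAcard, col, hcol⟩ := hN χ X hX
    obtain ⟨c, -, hc⟩ := exists_lt_card_fiber_of_mul_lt_card_of_maps_to (n := n)
      (fun x _ => mem_univ (col x)) (by rw [card_univ, hAcard]; omega)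
    obtain ⟨S, hS, hScard⟩ := exists_subset_card_eq hc.le
    have hSA : S ⊆ A := hS.trans (filter_subset _ _)
    refine ⟨S, hSA.trans hAX, hScard, c, fun t ht htcard => ?_⟩
    have hne : t.Nonempty := card_pos.1 (by omega)
    rw [hcol t (ht.trans hSA) htcard hne]
    exact (mem_filter.1 (hS (ht (t.min'_mem hne)))).2

end Ramsey

lemma ceilDiv_eq_pred_div_add_one {a b : ℕ} (ha : 0 < a) (hb : 0 < b) :
    a ⌈/⌉ b = (a - 1) / b + 1 := by
  rw [Nat.ceilDiv_eq_add_pred_div, show a + b - 1 = a - 1 + b by omega, Nat.add_div_right _ hb]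

lemma ceilDiv_pos {a b : ℕ} (ha : 0 < a) (hb : 0 < b) : 0 < a ⌈/⌉ b := by
  rw [ceilDiv_eq_pred_div_add_one ha hb]
  exact Nat.succ_pos _

lemma mul_ceilDiv_mul_right {m s d : ℕ} (hs : 0 < s) (hd : 0 < d) :
    (m * s) ⌈/⌉ (s * d) = m ⌈/⌉ d :=
  eq_of_forall_ge_iff fun c => by
    rw [ceilDiv_le_iff_le_mul (Nat.mul_pos hs hd), ceilDiv_le_iff_le_mul hd, Nat.mul_assoc,
      Nat.mul_comm m, Nat.mul_le_mul_left_iff hs]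

lemma mul_ceilDiv_of_dvd {a b : ℕ} (h : b ∣ a) : b * (a ⌈/⌉ b) = a := by
  obtain ⟨c, rfl⟩ := h
  rcases Nat.eq_zero_or_pos b with rfl | hb
  · simp
  · rw [show b * c ⌈/⌉ b = c from smul_ceilDiv hb c]

lemma ceilDiv_sub_eq_two {k l : ℕ} (hl : 1 ≤ l) (hlk : 2 * l ≤ k) : k ⌈/⌉ (k - l) = 2 := by
  rw [ceilDiv_eq_pred_div_add_one (by omega) (by omega),
    Nat.div_eq_of_lt_le (k := 1) (by omega) (by omega)]

section Path

variable {k l m : ℕ}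

def pathEdge (k l i : ℕ) : Finset ℕ := (range k).image fun j => i * (k - l) + j

lemma pathWithEdges_eq_image (k l m : ℕ) : pathWithEdges k l m = (range m).image (pathEdge k l) :=
  rfl

lemma mem_pathEdge {i v : ℕ} : v ∈ pathEdge k l i ↔ i * (k - l) ≤ v ∧ v < i * (k - l) + k := by
  simp only [pathEdge, mem_image, mem_range]
  exact ⟨fun ⟨j, hj, e⟩ => by omega, fun h => ⟨v - i * (k - l), by omega, by omega⟩⟩

lemma card_pathEdge (k l i : ℕ) : #(pathEdge k l i) = k := by
  rw [pathEdge, card_image_of_injective _ (add_right_injective _), card_range]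

lemma isUniform_pathWithEdges (k l m : ℕ) : IsUniform k (pathWithEdges k l m) := by
  simp only [IsUniform, pathWithEdges_eq_image, mem_image]
  rintro _ ⟨i, -, rfl⟩
  exact card_pathEdge k l i

lemma pathEdge_injective (hlk : l < k) : Function.Injective (pathEdge k l) := by
  have hmem : ∀ i, i * (k - l) ∈ pathEdge k l i := fun i => mem_pathEdge.2 ⟨le_rfl, by omega⟩
  intro i j hij
  have hi := mem_pathEdge.1 (hij ▸ hmem i)
  have hj := mem_pathEdge.1 (hij ▸ hmem j)
  exact Nat.eq_of_mul_eq_mul_right (by omega : 0 < k - l) (by omega)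

lemma card_pathWithEdges (hlk : l < k) (m : ℕ) : #(pathWithEdges k l m) = m := by
  rw [pathWithEdges_eq_image, card_image_of_injective _ (pathEdge_injective hlk), card_range]

lemma hVerts_pathWithEdges (hlk : l < k) (hm : 1 ≤ m) :
    hVerts (pathWithEdges k l m) = range (l + m * (k - l)) := by
  ext v
  simp only [hVerts, pathWithEdges_eq_image, mem_biUnion, mem_image, mem_range, id_eq]
  constructor
  · rintro ⟨_, ⟨i, hi, rfl⟩, hv⟩
    have := Nat.mul_le_mul_right (k - l) (show i + 1 ≤ m by omega)
    rw [Nat.add_mul, one_mul] at this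
    have := mem_pathEdge.1 hv
    omega
  · intro hv
    have hkl : 0 < k - l := by omega
    refine ⟨_, ⟨min (v / (k - l)) (m - 1), by omega, rfl⟩, mem_pathEdge.2 ?_⟩
    have hdiv := Nat.div_add_mod v (k - l)
    have hmod := Nat.mod_lt v hkl
    rcases le_or_gt (v / (k - l)) (m - 1) with h | h
    · rw [min_eq_left h, Nat.mul_comm]
      omega
    · rw [min_eq_right h.le]
      have h1 := Nat.mul_le_mul_right (k - l) (show m ≤ v / (k - l) by omega)
      have h2 : (m - 1) * (k - l) + (k - l) = m * (k - l) := by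
        rw [← Nat.succ_mul, Nat.succ_eq_add_one, Nat.sub_add_cancel hm]
      rw [Nat.mul_comm (k - l)] at hdiv
      omega

/-- Consecutive edges start `k - l` apart, so the edges through a vertex `v` have indices in an
interval of length `(k - 1) / (k - l)`. -/
lemma card_filter_mem_pathEdge_le (hlk : l < k) (m v : ℕ) :
    #{i ∈ range m | v ∈ pathEdge k l i} ≤ k ⌈/⌉ (k - l) := by
  set S := {i ∈ range m | v ∈ pathEdge k l i}
  rcases S.eq_empty_or_nonempty with hS | hS
  · simp [hS]
  have hi₀ := mem_pathEdge.1 (mem_filter.1 (S.min'_mem hS)).2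
  have hsub : S ⊆ Icc (S.min' hS) (S.min' hS + (k - 1) / (k - l)) := fun i hi => by
    have hle := S.min'_le i hi
    have hvi := mem_pathEdge.1 (mem_filter.1 hi).2
    have := Nat.mul_le_mul_right (k - l) hle
    have hmul : (i - S.min' hS) * (k - l) ≤ k - 1 := by rw [Nat.sub_mul]; omega
    have := (Nat.le_div_iff_mul_le (by omega)).2 hmul
    exact mem_Icc.2 ⟨hle, by omega⟩
  calc #S ≤ (k - 1) / (k - l) + 1 :=
        (card_le_card hsub).trans_eq (by rw [Nat.card_Icc, add_assoc, Nat.add_sub_cancel_left])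
    _ = k ⌈/⌉ (k - l) := (ceilDiv_eq_pred_div_add_one (by omega) (by omega)).symm

lemma card_filter_mem_pathWithEdges_le (hlk : l < k) (m v : ℕ) :
    #{e ∈ pathWithEdges k l m | v ∈ e} ≤ k ⌈/⌉ (k - l) := by
  rw [pathWithEdges_eq_image, filter_image]
  exact card_image_le.trans (card_filter_mem_pathEdge_le hlk m v)

lemma hPath_eq_pathWithEdges (hlk : l < k) (m : ℕ) :
    hPath k l (l + m * (k - l)) = pathWithEdges k l m := by
  rw [hPath, Nat.add_sub_cancel_left, Nat.mul_div_cancel _ (by omega)]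

end Path

section Hypergraph

variable {α : Type*}

lemma mem_hVerts {H : Finset (Finset ℕ)} {v : ℕ} : v ∈ hVerts H ↔ ∃ e ∈ H, v ∈ e := by
  simp [hVerts]

lemma subset_hVerts {H : Finset (Finset ℕ)} {e : Finset ℕ} (he : e ∈ H) : e ⊆ hVerts H :=
  subset_biUnion_of_mem id he

lemma card_le_card_mul_of_forall_exists_mem [DecidableEq α] {H : Finset (Finset α)}
    {B : Finset α} {d : ℕ} (hdeg : ∀ v, #{e ∈ H | v ∈ e} ≤ d) (hB : ∀ e ∈ H, ∃ v ∈ B, v ∈ e) :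
    #H ≤ #B * d :=
  calc #H ≤ #(B.biUnion fun v => {e ∈ H | v ∈ e}) := card_le_card fun e he => by
        obtain ⟨v, hv, hve⟩ := hB e he
        exact mem_biUnion.2 ⟨v, hv, mem_filter.2 ⟨he, hve⟩⟩
    _ ≤ #B * d := card_biUnion_le_card_mul _ _ _ fun v _ => hdeg v

lemma card_le_card_mul_of_forall_exists_image_mem {H : Finset (Finset ℕ)} {A : Finset ℕ} {d : ℕ}
    {f : ℕ → ℕ} (hdeg : ∀ v, #{e ∈ H | v ∈ e} ≤ d) (hf : Set.InjOn f (hVerts H))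
    (hA : ∀ e ∈ H, ∃ v ∈ e, f v ∈ A) : #H ≤ #A * d := by
  set B := {v ∈ hVerts H | f v ∈ A}
  have hB : ∀ e ∈ H, ∃ v ∈ B, v ∈ e := fun e he => by
    obtain ⟨v, hv, hvA⟩ := hA e he
    exact ⟨v, mem_filter.2 ⟨subset_hVerts he hv, hvA⟩, hv⟩
  have hBA : #B ≤ #A := card_le_card_of_injOn f (fun v hv => (mem_filter.1 hv).2)
    (hf.mono (coe_subset.2 (filter_subset _ _)))
  exact (card_le_card_mul_of_forall_exists_mem hdeg hB).trans (Nat.mul_le_mul_right _ hBA)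

variable [LinearOrder α]

def numBelow (s : Finset α) (x : α) : ℕ := #{y ∈ s | y < x}

lemma numBelow_mono (s : Finset α) : Monotone (numBelow s) := fun _ _ hxy =>
  card_le_card (monotone_filter_right s fun _ _ hz => hz.trans_le hxy)

lemma numBelow_strictMonoOn (s : Finset α) : StrictMonoOn (numBelow s) s := by
  intro x hx y _ hxy
  refine card_lt_card ((ssubset_iff_of_subset ?_).2 ⟨x, ?_, ?_⟩)
  · exact monotone_filter_right s fun _ _ hz => hz.trans hxy
  · exact mem_filter.2 ⟨hx, hxy⟩
  · simp

lemma numBelow_lt_card {s : Finset α} {x : α} (hx : x ∈ s) : numBelow s x < #s :=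
  card_lt_card (filter_ssubset.2 ⟨x, hx, lt_irrefl x⟩)

lemma card_filter_numBelow_mem_le (s : Finset α) (T : Finset ℕ) :
    #{x ∈ s | numBelow s x ∈ T} ≤ #T :=
  card_le_card_of_injOn _ (fun _ hx => (mem_filter.1 hx).2)
    ((numBelow_strictMonoOn s).injOn.mono (coe_subset.2 (filter_subset _ _)))

lemma card_filter_numBelow_div_eq_le (s : Finset α) {p : ℕ} (hp : 0 < p) (c : ℕ) :
    #{x ∈ s | numBelow s x / p = c} ≤ p := by
  refine (card_le_card fun x hx => ?_).trans
    ((card_filter_numBelow_mem_le s (Ico (c * p) (c * p + p))).trans_eq (by simp))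
  rw [mem_filter] at hx ⊢
  have := (Nat.div_eq_iff hp).1 hx.2
  exact ⟨hx.1, mem_Ico.2 ⟨this.1, by omega⟩⟩

lemma card_filter_le_numBelow_le (s : Finset α) (a : ℕ) :
    #{x ∈ s | a ≤ numBelow s x} ≤ #s - a := by
  refine (card_le_card fun x hx => ?_).trans
    ((card_filter_numBelow_mem_le s (Ico a #s)).trans_eq (Nat.card_Ico _ _))
  rw [mem_filter] at hx ⊢
  exact ⟨hx.1, mem_Ico.2 ⟨hx.2, numBelow_lt_card hx.1⟩⟩

def blockColoring (V : Finset ℕ) (p r : ℕ) (e : Finset ℕ) : Fin (r + 1) :=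
  if h : e.Nonempty then ⟨min (numBelow V (e.min' h) / p) r, by omega⟩ else 0

lemma exists_least_of_blockColoring_eq {V : Finset ℕ} {p r : ℕ} {c : Fin (r + 1)}
    {e : Finset ℕ} (he : e.Nonempty) (hc : blockColoring V p r e = c) :
    ∃ a ∈ e, min (numBelow V a / p) r = c ∧ ∀ x ∈ e, numBelow V a ≤ numBelow V x :=
  ⟨e.min' he, e.min'_mem he, by rw [← hc, blockColoring, dif_pos he],
    fun x hx => numBelow_mono V (e.min'_le x hx)⟩

theorem le_card_hVerts_of_arrows {H G : Finset (Finset ℕ)} {r d : ℕ}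
    (hH : ∀ e ∈ H, e.Nonempty) (hdeg : ∀ v, #{e ∈ H | v ∈ e} ≤ d) (hG : Arrows (r + 1) G H) :
    r * (#H ⌈/⌉ d - 1) + #(hVerts H) ≤ #(hVerts G) := by
  set V := hVerts G
  set p := #H ⌈/⌉ d - 1
  obtain ⟨c, f, hf, hfG⟩ := hG (blockColoring V p r)
  have hfV : Set.MapsTo f (hVerts H) V := fun v hv => by
    obtain ⟨e, he, hve⟩ := mem_hVerts.1 hv
    exact subset_hVerts (mem_filter.1 (hfG e he)).1 (mem_image_of_mem f hve)
  have hleast : ∀ e ∈ H, ∃ u ∈ e, min (numBelow V (f u) / p) r = c ∧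
      ∀ w ∈ e, numBelow V (f u) ≤ numBelow V (f w) := fun e he => by
    obtain ⟨a, ha, hac, hamin⟩ :=
      exists_least_of_blockColoring_eq ((hH e he).image f) (mem_filter.1 (hfG e he)).2
    obtain ⟨u, hu, rfl⟩ := mem_image.1 ha
    exact ⟨u, hu, hac, fun w hw => hamin _ (mem_image_of_mem f hw)⟩
  by_contra hlt
  rcases Nat.eq_zero_or_pos p with hp | hp
  · have := card_le_card_of_injOn f hfV hf
    rw [hp, Nat.mul_zero, Nat.zero_add] at hlt
    omega
  rcases (Fin.is_le c).lt_or_eq with hc | hc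
  · -- the least vertices of the copy's edges all lie in block `c`, which has `p` vertices
    have hHp : #H ≤ p * d :=
      calc #H ≤ #{x ∈ V | numBelow V x / p = c} * d :=
            card_le_card_mul_of_forall_exists_image_mem hdeg hf fun e he => by
              obtain ⟨u, hu, huc, -⟩ := hleast e he
              exact ⟨u, hu, mem_filter.2 ⟨hfV (subset_hVerts he hu), by omega⟩⟩
        _ ≤ p * d := Nat.mul_le_mul_right _ (card_filter_numBelow_div_eq_le V hp c)
    have hd : 0 < d := Nat.pos_of_ne_zero fun hd => by simp [p, hd] at hp
    have := (ceilDiv_le_iff_le_mul hd).2 (hHp.trans_eq (Nat.mul_comm _ _))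
    omega
  · -- the whole copy lies beyond the first `r` blocks
    set W : Finset ℕ := {x ∈ V | r * p ≤ numBelow V x}
    have hW : Set.MapsTo f (hVerts H) W := fun v hv => by
      obtain ⟨e, he, hve⟩ := mem_hVerts.1 hv
      obtain ⟨u, -, huc, hu⟩ := hleast e he
      have hr : r ≤ numBelow V (f u) / p := by omega
      exact mem_filter.2 ⟨hfV hv, ((Nat.le_div_iff_mul_le hp).1 hr).trans (hu v hve)⟩
    obtain ⟨e, he⟩ : H.Nonempty := nonempty_iff_ne_empty.2 fun h => by simp [p, h] at hp
    obtain ⟨v, hve⟩ := hH e he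
    have hrp := (mem_filter.1 (mem_coe.1 (hW (subset_hVerts he hve)))).2
    have hvV := numBelow_lt_card (hfV (subset_hVerts he hve))
    have := (card_le_card_of_injOn f hW hf).trans (card_filter_le_numBelow_le V _)
    omega

lemma exists_isUniform_arrows {k : ℕ} {H : Finset (Finset ℕ)} (hH : IsUniform k H) (r : ℕ) :
    ∃ G, IsUniform k G ∧ Arrows r G H := by
  obtain ⟨N, hN⟩ := exists_isHomogeneous (α := ℕ) (C := Fin r) k #(hVerts H)
  refine ⟨powersetCard k (range N), fun e he => (mem_powersetCard.1 he).2, fun χ => ?_⟩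
  obtain ⟨S, hSN, hS, c, hc⟩ := hN χ (range N) (by rw [card_range])
  obtain ⟨f, hfS, hf⟩ := (hVerts H).finite_toSet.exists_injOn_of_encard_le
    (t := (S : Set ℕ)) (by simp [Set.encard_coe_eq_coe_finsetCard, hS])
  refine ⟨c, f, hf, fun e he => ?_⟩
  have heS : e.image f ⊆ S := image_subset_iff.2 fun v hv => hfS (subset_hVerts he hv)
  have hcard : #(e.image f) = k := by
    rw [card_image_of_injOn (hf.mono (coe_subset.2 (subset_hVerts he))), hH e he]
  exact mem_filter.2 ⟨mem_powersetCard.2 ⟨heS.trans hSN, hcard⟩, hc _ heS hcard⟩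

lemma le_vertexRamsey {k r b : ℕ} {H : Finset (Finset ℕ)} (hH : IsUniform k H)
    (hb : ∀ G, IsUniform k G → Arrows r G H → b ≤ #(hVerts G)) : b ≤ vertexRamsey k r H := by
  obtain ⟨G, hGk, hGH⟩ := exists_isUniform_arrows hH r
  exact le_csInf ⟨_, G, hGk, hGH, rfl⟩ fun _ ⟨G, hGk, hGH, hG⟩ => hG ▸ hb G hGk hGH

end Hypergraph

theorem le_vertexRamsey_hPath {k l m : ℕ} (hlk : l < k) (hm : 1 ≤ m) (r : ℕ) :
    r * (m ⌈/⌉ (k ⌈/⌉ (k - l)) - 1) + (l + m * (k - l)) ≤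
      vertexRamsey k (r + 1) (hPath k l (l + m * (k - l))) := by
  rw [hPath_eq_pathWithEdges hlk]
  refine le_vertexRamsey (isUniform_pathWithEdges k l m) fun G _ hG => ?_
  have hne : ∀ e ∈ pathWithEdges k l m, e.Nonempty := fun e he =>
    card_pos.1 (by rw [isUniform_pathWithEdges k l m e he]; omega)
  have := le_card_hVerts_of_arrows hne (card_filter_mem_pathWithEdges_le hlk m) hG
  rwa [card_pathWithEdges hlk, hVerts_pathWithEdges hlk hm, card_range] at this

lemma lt_of_mul_sub_one_add_le {r q n R : ℕ} (hq : 1 ≤ q) (h : r * (q - 1) + n ≤ R) :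
    (r : ℝ) * q + n - (r + 1) < R := by
  have : ((r * (q - 1) + n : ℕ) : ℝ) ≤ R := by exact_mod_cast h
  push_cast [Nat.cast_sub hq] at this
  linarith

lemma one_add_div_mul_sub_le_mul_ceilDiv {r n l D : ℕ} (hD : 0 < D) (hlD : l ≤ D) :
    (1 + (r : ℝ) / D) * n - 2 * ((r : ℝ) + 1) + 1 ≤ r * ((n - l) ⌈/⌉ D : ℕ) + n - (r + 1) := by
  have hqD : (n : ℝ) ≤ D * ((n - l) ⌈/⌉ D : ℕ) + D := by
    have h : n - l ≤ D * ((n - l) ⌈/⌉ D) := le_smul_ceilDiv (a := D) hD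
    have h' : n ≤ D * ((n - l) ⌈/⌉ D) + D := by omega
    exact_mod_cast h'
  have hD' : (0 : ℝ) < D := by exact_mod_cast hD
  have : (r : ℝ) / D * n ≤ r * ((n - l) ⌈/⌉ D : ℕ) + r := by
    rw [div_mul_eq_mul_div, div_le_iff₀ hD']
    nlinarith [mul_le_mul_of_nonneg_left hqD r.cast_nonneg]
  linarith

theorem stmt7_general (k r l m n : ℕ) (hr : 2 ≤ r) (hl1 : 1 ≤ l) (hl2 : l ≤ k - 1)
    (hm : 1 ≤ m) (hn : n = l + m * (k - l)) :
    ((vertexRamsey k r (hPath k l n) : ℝ) >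
        ((r : ℝ) - 1) * (((n - l) ⌈/⌉ ((k - l) * (k ⌈/⌉ (k - l))) : ℕ) : ℝ) + n - r) ∧
    (((r : ℝ) - 1) * (((n - l) ⌈/⌉ ((k - l) * (k ⌈/⌉ (k - l))) : ℕ) : ℝ) + n - r ≥
        (1 + ((r : ℝ) - 1) / ((((k - l) * (k ⌈/⌉ (k - l))) : ℕ) : ℝ)) * n - 2 * r + 1) ∧
    ((k - l) ∣ k →
      (vertexRamsey k r (hPath k l n) : ℝ) >
        (((r : ℝ) - 1 + k) / k) * n - 2 * r + 1) ∧
    (2 * l ≤ k →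
      (vertexRamsey k r (hPath k l n) : ℝ) >
        (((r : ℝ) - 1 + 2 * ((k : ℝ) - l)) / (2 * ((k : ℝ) - l))) * n - 2 * r + 1) := by
  have hlk : l < k := by omega
  obtain ⟨r, rfl⟩ : ∃ r', r = r' + 1 := ⟨r - 1, by omega⟩
  have hd := ceilDiv_pos (show 0 < k by omega) (show 0 < k - l by omega)
  have hkD : k ≤ (k - l) * (k ⌈/⌉ (k - l)) := le_smul_ceilDiv (a := k - l) (by omega)
  generalize hD : (k - l) * (k ⌈/⌉ (k - l)) = D at hkD
  have hq : (n - l) ⌈/⌉ D = m ⌈/⌉ (k ⌈/⌉ (k - l)) := by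
    rw [hn, Nat.add_sub_cancel_left, ← hD, mul_ceilDiv_mul_right (by omega) hd]
  have hR := le_vertexRamsey_hPath hlk hm r
  rw [← hn, ← hq] at hR
  have part1 := lt_of_mul_sub_one_add_le (hq ▸ ceilDiv_pos hm hd) hR
  have part2 := one_add_div_mul_sub_le_mul_ceilDiv (r := r) (n := n) (by omega : 0 < D)
    (by omega : l ≤ D)
  have hK : ∀ K : ℝ, (D : ℝ) = K →
      ((r + K) / K) * n - 2 * ((r : ℝ) + 1) + 1 < vertexRamsey k (r + 1) (hPath k l n) := by
    intro K hK
    rw [add_div, div_self (hK ▸ (by exact_mod_cast (show D ≠ 0 by omega))), ← hK, add_comm]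
    linarith
  push_cast
  simp only [add_sub_cancel_right]
  refine ⟨part1, part2, fun hdvd => hK k ?_, fun h2l => hK _ ?_⟩
  · rw [← hD, mul_ceilDiv_of_dvd hdvd]
  · rw [← hD, ceilDiv_sub_eq_two hl1 h2l]
    push_cast [Nat.cast_sub hlk.le]
    ring

theorem stmt7 (k r l m n : ℕ) (hk : 2 ≤ k) (hr : 2 ≤ r) (hl1 : 1 ≤ l) (hl2 : l ≤ k - 1)
    (hm : 1 ≤ m) (hn : n = l + m * (k - l)) :
    ((vertexRamsey k r (hPath k l n) : ℝ) >
        ((r : ℝ) - 1) * (((n - l) ⌈/⌉ ((k - l) * (k ⌈/⌉ (k - l))) : ℕ) : ℝ) + n - r) ∧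
    (((r : ℝ) - 1) * (((n - l) ⌈/⌉ ((k - l) * (k ⌈/⌉ (k - l))) : ℕ) : ℝ) + n - r ≥
        (1 + ((r : ℝ) - 1) / ((((k - l) * (k ⌈/⌉ (k - l))) : ℕ) : ℝ)) * n - 2 * r + 1) ∧
    ((k - l) ∣ k →
      (vertexRamsey k r (hPath k l n) : ℝ) >
        (((r : ℝ) - 1 + k) / k) * n - 2 * r + 1) ∧
    (2 * l ≤ k →
      (vertexRamsey k r (hPath k l n) : ℝ) >
        (((r : ℝ) - 1 + 2 * ((k : ℝ) - l)) / (2 * ((k : ℝ) - l))) * n - 2 * r + 1) :=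
  stmt7_general k r l m n hr hl1 hl2 hm hn
end

section
/- For all r ≥ 2, k ≥ 2 and n ≥ k: R̂_r(P_n^{(k)}) ≤ C(⌊r(k+1)n/2⌋, k) ≤ (e·r·(k+1)·n/(2k))^k, where C(a,b) denotes the binomial coefficient and e is Euler's number. -/
open Finset

/-!
The host is the complete `k`-partite `k`-graph with parts of size `t = r k θ + 1`, where
`θ = ⌊(n - 1) / k⌋`; it has `t ^ k` edges. Some colour class has more than `θ k t ^ (k - 1)`
edges. Repeatedly deleting all edges through a `(k - 1)`-set of codegree at most `θ` costs at
most `θ` edges per `(k - 1)`-set, so a nonempty subgraph survives in which every `(k - 1)`-set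
lying in an edge has codegree greater than `θ`. There a tight path on `n` vertices, with its
`j`-th vertex in part `j mod k`, is embedded greedily: at most `θ` earlier vertices share the part
of a new vertex, so one of the more than `θ` ways to complete the last window is fresh.

For the count, `t ^ k ≤ C(N, k)` with `N = ⌊r (k + 1) n / 2⌋` follows by pairing the factors
`i + 1` and `k - i` of `k!` against `N - i` and `N - k + 1 + i` of `N! / (N - k)!`, and
`C(N, k) ≤ (e N / k) ^ k` is the usual consequence of `k ^ k / k! ≤ e ^ k`.
-/

theorem IsCopy.mono {H G G' : Finset (Finset ℕ)} (h : IsCopy H G) (hG : G ⊆ G') : IsCopy H G' :=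
  let ⟨f, hf, hedge⟩ := h
  ⟨f, hf, fun e he => hG (hedge e he)⟩

theorem sizeRamsey_le {k r : ℕ} {G H : Finset (Finset ℕ)} (hG : IsUniform k G)
    (hGH : Arrows r G H) : sizeRamsey k r H ≤ #G :=
  Nat.sInf_le ⟨G, hG, hGH, rfl⟩

namespace TightPath

open Function

section

variable {k : ℕ}

/-- Vertex `a` of part `p` is the natural number `p + k * a`. -/
def transversal (g : Fin k → ℕ) : Finset ℕ := univ.image fun p : Fin k => (p : ℕ) + k * g p

theorem val_add_mul_inj {p q : Fin k} {a b : ℕ} (h : (p : ℕ) + k * a = q + k * b) :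
    p = q ∧ a = b := by
  have hk : 0 < k := p.pos
  have hpq : (p : ℕ) = q := by
    simpa [Nat.add_mul_mod_self_left, Nat.mod_eq_of_lt p.isLt, Nat.mod_eq_of_lt q.isLt]
      using congrArg (· % k) h
  exact ⟨Fin.ext hpq, Nat.eq_of_mul_eq_mul_left hk (by omega)⟩

theorem mem_transversal {g : Fin k → ℕ} {x : ℕ} :
    x ∈ transversal g ↔ ∃ p : Fin k, (p : ℕ) + k * g p = x := by
  simp [transversal]

theorem card_transversal (g : Fin k → ℕ) : #(transversal g) = k := by
  rw [transversal, card_image_of_injective _ fun p q h => (val_add_mul_inj h).1]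
  simp

theorem transversal_injective : Injective (transversal (k := k)) := by
  intro g g' h
  funext p
  have hp : (p : ℕ) + k * g p ∈ transversal g' := h ▸ mem_transversal.2 ⟨p, rfl⟩
  obtain ⟨q, hq⟩ := mem_transversal.1 hp
  obtain ⟨rfl, hv⟩ := val_add_mul_inj hq
  exact hv.symm

def grid (k t : ℕ) : Finset (Fin k → ℕ) := Fintype.piFinset fun _ => range t

def completePartite (k t : ℕ) : Finset (Finset ℕ) := (grid k t).image transversal

theorem isUniform_completePartite (k t : ℕ) : IsUniform k (completePartite k t) := by
  simp only [IsUniform, completePartite, mem_image]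
  rintro _ ⟨g, -, rfl⟩
  exact card_transversal g

theorem card_completePartite (k t : ℕ) : #(completePartite k t) = t ^ k := by
  simp [completePartite, card_image_of_injective _ transversal_injective, grid]

/-- The edges of `K` through the `(k-1)`-set `g` with its `i`-th vertex removed. -/
def star (K : Finset (Fin k → ℕ)) (i : Fin k) (g : Fin k → ℕ) : Finset (Fin k → ℕ) :=
  K.filter fun h => update h i 0 = update g i 0

/-- The `(k-1)`-sets covered by `K`; the one missing part `i` is encoded as `(i, g)` with
`g i = 0`. -/
def slots (K : Finset (Fin k → ℕ)) : Finset (Fin k × (Fin k → ℕ)) :=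
  (K ×ˢ univ).image fun x => (x.2, update x.1 x.2 0)

def IsCodegreeGT (θ : ℕ) (K : Finset (Fin k → ℕ)) : Prop :=
  ∀ g ∈ K, ∀ i, θ < #(star K i g)

theorem mem_star_self {K : Finset (Fin k → ℕ)} {g : Fin k → ℕ} (hg : g ∈ K) (i : Fin k) :
    g ∈ star K i g :=
  mem_filter.2 ⟨hg, rfl⟩

theorem eq_update_of_mem_star {K : Finset (Fin k → ℕ)} {i : Fin k} {g h : Fin k → ℕ}
    (hh : h ∈ star K i g) : h = update g i (h i) :=
  eq_update_iff.2 ⟨rfl, fun x hx => by simpa [hx] using congrFun (mem_filter.1 hh).2 x⟩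

theorem exists_mem_star_notMem {θ : ℕ} {K : Finset (Fin k → ℕ)} (hK : IsCodegreeGT θ K)
    {g : Fin k → ℕ} (hg : g ∈ K) (p : Fin k) {U : Finset ℕ} (hU : #U ≤ θ) :
    ∃ h ∈ star K p g, h p ∉ U := by
  have hinj : Set.InjOn (fun h : Fin k → ℕ => h p) (star K p g) := fun h hh h' hh' hp => by
    rw [eq_update_of_mem_star hh, eq_update_of_mem_star hh']
    exact congrArg _ hp
  obtain ⟨a, ha, haU⟩ := exists_mem_notMem_of_card_lt_card
    (hU.trans_lt ((hK g hg p).trans_eq (card_image_of_injOn hinj).symm))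
  obtain ⟨h, hh, rfl⟩ := mem_image.1 ha
  exact ⟨h, hh, haU⟩

theorem exists_isCodegreeGT_subset (θ : ℕ) (H : Finset (Fin k → ℕ)) :
    ∃ K ⊆ H, IsCodegreeGT θ K ∧ #H ≤ #K + θ * #(slots H) := by
  induction H using Finset.strongInduction with
  | H H ih =>
  by_cases hH : IsCodegreeGT θ H
  · exact ⟨H, Subset.rfl, hH, Nat.le_add_right _ _⟩
  simp only [IsCodegreeGT, not_forall, not_lt] at hH
  obtain ⟨g, hg, i, hsmall⟩ := hH
  have hsub : H \ star H i g ⊂ H :=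
    sdiff_ssubset (filter_subset _ _) ⟨g, mem_star_self hg i⟩
  obtain ⟨K, hKH, hK, hcard⟩ := ih _ hsub
  have hslots : #(slots (H \ star H i g)) < #(slots H) := by
    refine card_lt_card ⟨image_subset_image (product_subset_product_left sdiff_subset), ?_⟩
    intro hsl
    have : (i, update g i 0) ∈ slots (H \ star H i g) :=
      hsl (mem_image.2 ⟨(g, i), mem_product.2 ⟨hg, mem_univ i⟩, rfl⟩)
    simp only [slots, mem_image, mem_product, mem_sdiff, Prod.mk.injEq] at this
    obtain ⟨⟨h, j⟩, ⟨⟨hh, hnot⟩, -⟩, rfl, hslot⟩ := this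
    exact hnot (mem_filter.2 ⟨hh, hslot⟩)
  refine ⟨K, hKH.trans sdiff_subset, hK, ?_⟩
  calc #H = #(H \ star H i g) + #(star H i g) :=
        (card_sdiff_add_card_eq_card (filter_subset _ _)).symm
    _ ≤ #K + θ * #(slots (H \ star H i g)) + θ := by omega
    _ ≤ #K + θ * #(slots H) := by nlinarith

theorem card_slots_le {t : ℕ} {H : Finset (Fin k → ℕ)} (hH : H ⊆ grid k t) :
    #(slots H) ≤ k * t ^ (k - 1) := by
  classical
  let line (i : Fin k) : Finset (Fin k → ℕ) :=
    Fintype.piFinset (update (fun _ => range t) i {0})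
  have hsub : slots H ⊆ univ.biUnion fun i => {i} ×ˢ line i := by
    simp only [subset_iff, slots, mem_image, mem_product, mem_biUnion, mem_singleton]
    rintro _ ⟨⟨g, i⟩, ⟨hg, -⟩, rfl⟩
    refine ⟨i, mem_univ i, rfl, Fintype.mem_piFinset.2 fun j => ?_⟩
    by_cases hj : j = i
    · subst hj; simp
    · simpa [hj] using Fintype.mem_piFinset.1 (hH hg) j
  have hline (i : Fin k) : #(line i) = t ^ (k - 1) := by
    simp only [line, Fintype.card_piFinset, update_apply, apply_ite card, card_singleton,
      card_range]
    rw [prod_ite, prod_const_one, one_mul, prod_const, filter_ne',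
      card_erase_of_mem (mem_univ i), card_univ, Fintype.card_fin]
  calc #(slots H) ≤ ∑ i, #({i} ×ˢ line i) := (card_le_card hsub).trans card_biUnion_le
    _ = k * t ^ (k - 1) := by simp [hline]

theorem exists_nonempty_isCodegreeGT {t θ : ℕ} {H : Finset (Fin k → ℕ)} (hH : H ⊆ grid k t)
    (hcard : θ * (k * t ^ (k - 1)) < #H) : ∃ K ⊆ H, K.Nonempty ∧ IsCodegreeGT θ K := by
  obtain ⟨K, hKH, hK, hcardK⟩ := exists_isCodegreeGT_subset θ H
  refine ⟨K, hKH, card_pos.1 ?_, hK⟩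
  have := Nat.mul_le_mul_left θ (card_slots_le hH)
  omega

def IsPartInjective (k : ℕ) (val : ℕ → ℕ) (m : ℕ) : Prop :=
  ∀ x < m, ∀ y < m, x % k = y % k → val x = val y → x = y

theorem card_filter_mod_eq_le (k m : ℕ) :
    #((range m).filter fun j => j % k = m % k) ≤ m / k := by
  rcases k.eq_zero_or_pos with rfl | hk
  · simp
  refine (card_le_card_of_injOn (t := range (m / k)) (· / k) (fun j hj => ?_)
    fun x hx y hy hxy => ?_).trans_eq (card_range _)
  · rw [mem_coe, mem_filter, mem_range] at hj
    rw [coe_range, Set.mem_Iio]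
    beta_reduce
    refine Nat.lt_of_mul_lt_mul_left (a := k) ?_
    have := Nat.div_add_mod j k
    have := Nat.div_add_mod m k
    omega
  · rw [mem_coe, mem_filter, mem_range] at hx hy
    beta_reduce at hxy
    rw [← Nat.div_add_mod x k, ← Nat.div_add_mod y k, hxy, hx.2, hy.2]

theorem IsPartInjective.update_of_notMem {k m a : ℕ} {val : ℕ → ℕ}
    (hval : IsPartInjective k val m)
    (ha : a ∉ ((range m).filter fun j => j % k = m % k).image val) :
    IsPartInjective k (update val m a) (m + 1) := by
  have key (j : ℕ) (hj : j < m + 1) (hjm : j % k = m % k) (h : update val m a j = a) :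
      j = m := by
    by_contra hne
    rw [update_of_ne hne] at h
    exact ha (mem_image.2 ⟨j, mem_filter.2 ⟨mem_range.2 (by omega), hjm⟩, h⟩)
  intro x hx y hy hxy hv
  by_cases hxm : x = m
  · subst hxm
    exact (key y hy hxy.symm (hv.symm.trans (update_self ..))).symm
  by_cases hym : y = m
  · subst hym
    exact key x hx hxy (hv.trans (update_self ..))
  rw [update_of_ne hxm, update_of_ne hym] at hv
  exact hval x (by omega) y (by omega) hxy hv

end

section

open Fin.CommRing

variable {k : ℕ} [NeZero k]

/-- The `k` consecutive positions `i, …, i + k - 1` hit every residue class mod `k` once;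
`window val i` records the values there, indexed by residue class. -/
def window (val : ℕ → ℕ) (i : ℕ) (p : Fin k) : ℕ := val (i + (p - i : Fin k))

theorem natCast_add_sub_natCast (i d : ℕ) : ((i + d : ℕ) : Fin k) - i = d := by
  push_cast; ring

theorem natCast_ne_natCast_of_lt {a b : ℕ} (hab : a < b) (hba : b < a + k) :
    (a : Fin k) ≠ b := by
  intro h
  have := natCast_add_sub_natCast (k := k) a (b - a)
  rw [Nat.add_sub_cancel' hab.le, ← h, sub_self, eq_comm, Fin.natCast_eq_zero] at this
  exact absurd (Nat.le_of_dvd (by omega) this) (by omega)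

theorem window_natCast_add (val : ℕ → ℕ) (i : ℕ) {d : ℕ} (hd : d < k) :
    window val i ((i + d : ℕ) : Fin k) = val (i + d) := by
  rw [window, natCast_add_sub_natCast, Fin.val_cast_of_lt hd]

theorem exists_natCast_add_eq (i : ℕ) (p : Fin k) : ∃ d < k, ((i + d : ℕ) : Fin k) = p :=
  ⟨(p - i : Fin k), Fin.is_lt _, by push_cast; ring⟩

theorem window_congr {val val' : ℕ → ℕ} {i : ℕ}
    (h : ∀ d < k, val (i + d) = val' (i + d)) :
    (window val i : Fin k → ℕ) = window val' i :=
  funext fun p => h _ (p - i : Fin k).is_lt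

theorem window_update_add (val : ℕ → ℕ) (i a : ℕ) :
    window (update val (i + k) a) (i + 1) = update (window val i) (i : Fin k) a := by
  funext p
  obtain ⟨d, hd, rfl⟩ := exists_natCast_add_eq (i + 1) p
  rw [window_natCast_add _ _ hd]
  rcases Nat.lt_or_ge (d + 1) k with hlt | hge
  · have hne : ((i + 1 + d : ℕ) : Fin k) ≠ i :=
      (natCast_ne_natCast_of_lt (by omega) (by omega)).symm
    rw [update_of_ne (by omega), update_of_ne hne, show i + 1 + d = i + (d + 1) by ring,
      window_natCast_add _ _ hlt]
  · have hd : i + 1 + d = i + k := by omega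
    rw [hd, update_self, Nat.cast_add, Fin.natCast_self, add_zero, update_self]

theorem window_zero (g : Fin k → ℕ) : window (fun j => g j) 0 = g := by
  funext p
  simp [window]

/-- Greedy embedding, one vertex at a time: the star of the last window in the part of the
new vertex has more than `θ` edges, whose new vertices are distinct, while at most `θ`
earlier vertices of the path lie in that part. -/
theorem exists_isPartInjective_window_mem {θ : ℕ} {K : Finset (Fin k → ℕ)}
    (hK : IsCodegreeGT θ K) (hne : K.Nonempty) {m : ℕ} (hkm : k ≤ m) (hm : (m - 1) / k ≤ θ) :
    ∃ val : ℕ → ℕ, IsPartInjective k val m ∧ ∀ i, i + k ≤ m → window val i ∈ K := by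
  induction m, hkm using Nat.le_induction with
  | base =>
    obtain ⟨g, hg⟩ := hne
    refine ⟨fun j => g j, fun x hx y hy hxy _ => ?_, fun i hi => ?_⟩
    · rwa [Nat.mod_eq_of_lt hx, Nat.mod_eq_of_lt hy] at hxy
    · obtain rfl : i = 0 := by omega
      rwa [window_zero]
  | succ m hkm ih =>
    obtain ⟨val, hval, hwin⟩ := ih ((Nat.div_le_div_right (by omega)).trans hm)
    set U := ((range m).filter fun j => j % k = m % k).image val
    have hU : #U ≤ θ := card_image_le.trans <| (card_filter_mod_eq_le k m).trans <|
      (Nat.div_le_div_right (by omega)).trans hm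
    obtain ⟨h, hh, hfresh⟩ :=
      exists_mem_star_notMem hK (hwin (m - k) (by omega)) ((m - k : ℕ) : Fin k) hU
    refine ⟨update val m (h (m - k : ℕ)), hval.update_of_notMem hfresh, fun i hi => ?_⟩
    rcases Nat.lt_or_ge m (i + k) with hlast | hold
    · obtain ⟨j, rfl⟩ : ∃ j, m = j + k := ⟨m - k, by omega⟩
      obtain rfl : i = j + 1 := by omega
      rw [Nat.add_sub_cancel] at hh ⊢
      rw [window_update_add, ← eq_update_of_mem_star hh]
      exact (mem_filter.1 hh).1
    · rw [window_congr fun d hd => update_of_ne (by omega) _ _]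
      exact hwin i hold

theorem mem_hPath {n : ℕ} {e : Finset ℕ} :
    e ∈ hPath k (k - 1) n ↔ ∃ i, i + k ≤ n ∧ (range k).image (i + ·) = e := by
  have hk : k - (k - 1) = 1 := by have := NeZero.ne k; omega
  simp only [hPath, pathWithEdges, hk, Nat.div_one, mul_one, mem_image, mem_range]
  exact exists_congr fun i => and_congr_left' (by have := NeZero.ne k; omega)

theorem image_window_eq_transversal (val : ℕ → ℕ) (i : ℕ) :
    ((range k).image (i + ·)).image (fun x : ℕ => ((x : Fin k) : ℕ) + k * val x) =
      transversal (window val i : Fin k → ℕ) := by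
  ext x
  simp only [image_image, mem_image, mem_range, comp_apply, mem_transversal]
  constructor
  · rintro ⟨d, hd, rfl⟩
    exact ⟨_, by rw [window_natCast_add _ _ hd]⟩
  · rintro ⟨p, rfl⟩
    obtain ⟨d, hd, rfl⟩ := exists_natCast_add_eq i p
    exact ⟨d, hd, by rw [window_natCast_add _ _ hd]⟩

theorem isCopy_hPath {val : ℕ → ℕ} {n : ℕ} {K : Finset (Fin k → ℕ)}
    (hval : IsPartInjective k val n) (hwin : ∀ i, i + k ≤ n → window val i ∈ K) :
    IsCopy (hPath k (k - 1) n) (K.image transversal) := by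
  refine ⟨fun x => ((x : Fin k) : ℕ) + k * val x, fun x hx y hy hxy => ?_, fun e he => ?_⟩
  · have hlt {z : ℕ} (hz : z ∈ (hVerts (hPath k (k - 1) n) : Set ℕ)) : z < n := by
      obtain ⟨e, he, hze⟩ := mem_biUnion.1 hz
      obtain ⟨i, hi, rfl⟩ := mem_hPath.1 he
      obtain ⟨d, hd, rfl⟩ := mem_image.1 hze
      rw [mem_range] at hd
      omega
    obtain ⟨hpart, hv⟩ := val_add_mul_inj hxy
    rw [Fin.ext_iff, Fin.val_natCast, Fin.val_natCast] at hpart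
    exact hval x (hlt hx) y (hlt hy) hpart hv
  · obtain ⟨i, hi, rfl⟩ := mem_hPath.1 he
    rw [image_window_eq_transversal]
    exact mem_image_of_mem _ (hwin i hi)

theorem arrows_completePartite (r : ℕ) {θ n : ℕ} (hkn : k ≤ n) (hθ : (n - 1) / k ≤ θ) :
    Arrows r (completePartite k (r * k * θ + 1)) (hPath k (k - 1) n) := by
  intro χ
  set t := r * k * θ + 1
  have hcount : #(univ : Finset (Fin r)) * (θ * (k * t ^ (k - 1))) < #(grid k t) := by
    have hpow : t ^ k = t * t ^ (k - 1) := by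
      rw [← pow_succ', Nat.sub_add_cancel (Nat.one_le_iff_ne_zero.2 (NeZero.ne k))]
    have : 0 < t ^ (k - 1) := by positivity
    have ht : t = r * k * θ + 1 := rfl
    simp only [card_univ, Fintype.card_fin, grid, Fintype.card_piFinset, card_range, prod_const,
      hpow]
    nlinarith
  obtain ⟨c, -, hc⟩ := exists_lt_card_fiber_of_mul_lt_card_of_maps_to
    (f := fun g => χ (transversal g)) (fun _ _ => mem_univ _) hcount
  obtain ⟨K, hKH, hne, hK⟩ := exists_nonempty_isCodegreeGT (filter_subset _ _) hc
  obtain ⟨val, hval, hwin⟩ := exists_isPartInjective_window_mem hK hne hkn hθ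
  refine ⟨c, (isCopy_hPath hval hwin).mono ?_⟩
  intro e he
  obtain ⟨g, hg, rfl⟩ := mem_image.1 he
  obtain ⟨hgrid, hcol⟩ := mem_filter.1 (hKH hg)
  exact mem_filter.2 ⟨mem_image_of_mem _ hgrid, hcol⟩

end

end TightPath

namespace Nat

theorem factorial_sq_eq_prod_range (k : ℕ) : k ! ^ 2 = ∏ i ∈ range k, (i + 1) * (k - i) := by
  rw [prod_mul_distrib, prod_range_add_one_eq_factorial, ← descFactorial_eq_prod_range,
    descFactorial_self, sq]

theorem descFactorial_sq_eq_prod_range {N k : ℕ} (hk : k ≤ N) :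
    N.descFactorial k ^ 2 = ∏ i ∈ range k, (N - i) * (N + 1 - k + i) := by
  rw [prod_mul_distrib, ← descFactorial_eq_prod_range, sq]
  congr 1
  rw [descFactorial_eq_prod_range, ← Finset.prod_range_reflect (fun i : ℕ => N + 1 - k + i) k]
  exact Finset.prod_congr rfl fun i hi => by have := mem_range.1 hi; omega

theorem pow_le_choose_of_sq_le {N k t : ℕ} (h : ((k + 1) * t) ^ 2 ≤ 4 * N * (N + 1 - k)) :
    t ^ k ≤ N.choose k := by
  rcases lt_or_ge N k with hN | hk
  · have : t = 0 := by
      have : N + 1 - k = 0 := by omega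
      simp_all
    simp [this, show k ≠ 0 by omega]
  refine Nat.le_of_mul_le_mul_left ?_ (factorial_pos k)
  rw [← descFactorial_eq_factorial_mul_choose, mul_comm]
  refine (Nat.pow_le_pow_iff_left two_ne_zero).1 ?_
  rw [mul_pow, factorial_sq_eq_prod_range, descFactorial_sq_eq_prod_range hk, ← pow_mul,
    mul_comm k, pow_mul, ← card_range k, ← prod_const, card_range, ← prod_mul_distrib]
  refine prod_le_prod' fun i hi => ?_
  have hi := mem_range.1 hi
  have hpair : 4 * ((i + 1) * (k - i)) ≤ (k + 1) ^ 2 := by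
    zify [hi.le]; nlinarith [sq_nonneg ((k:ℤ) - 2 * i - 1)]
  have hshift : N * (N + 1 - k) ≤ (N - i) * (N + 1 - k + i) := by
    zify [hk, hi.le, (show i ≤ N by omega), (show k ≤ N + 1 by omega)]; nlinarith
  refine Nat.le_of_mul_le_mul_left ?_ (by positivity : 0 < 4 * (k + 1) ^ 2)
  calc 4 * (k + 1) ^ 2 * (t ^ 2 * ((i + 1) * (k - i)))
      = ((k + 1) * t) ^ 2 * (4 * ((i + 1) * (k - i))) := by ring
    _ ≤ 4 * N * (N + 1 - k) * (k + 1) ^ 2 := Nat.mul_le_mul h hpair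
    _ ≤ 4 * ((N - i) * (N + 1 - k + i)) * (k + 1) ^ 2 := by
        rw [mul_assoc 4 N]; gcongr
    _ = _ := by ring

theorem choose_le_exp_mul_div_pow (N k : ℕ) :
    (N.choose k : ℝ) ≤ (Real.exp 1 * N / k) ^ k := by
  rcases k.eq_zero_or_pos with rfl | hk
  · simp
  have hk' : (0 : ℝ) < k := by exact_mod_cast hk
  calc (N.choose k : ℝ) ≤ (N : ℝ) ^ k / k ! := choose_le_pow_div k N
    _ = (N / k : ℝ) ^ k * ((k : ℝ) ^ k / k !) := by
        rw [div_pow]; field_simp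
    _ ≤ (N / k : ℝ) ^ k * Real.exp k := by
        gcongr; exact Real.pow_div_factorial_le_exp _ hk'.le k
    _ = (Real.exp 1 * N / k) ^ k := by
        rw [← Real.exp_one_pow, ← mul_pow]; ring

end Nat

theorem sq_le_four_mul_of_le {a k N X : ℕ} (hX : X ≤ 2 * N + 1) (hkX : 2 * k * (k + 1) ≤ X)
    (ha : a + k + 1 ≤ X) : a ^ 2 ≤ 4 * N * (N + 1 - k) := by
  have hkN : k ≤ N := by nlinarith
  zify [(by omega : k ≤ N + 1)] at *
  nlinarith

theorem sq_le_four_mul_half_mul {k r n : ℕ} (hk : 0 < k) (hr : 2 ≤ r) (hn : k ≤ n) :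
    ((k + 1) * (r * k * ((n - 1) / k) + 1)) ^ 2 ≤
      4 * (r * (k + 1) * n / 2) * (r * (k + 1) * n / 2 + 1 - k) := by
  have hpart : r * k * ((n - 1) / k) + 1 + 1 ≤ r * n := by
    have h1 : r * (k * ((n - 1) / k)) ≤ r * (n - 1) := Nat.mul_le_mul_left r (Nat.mul_div_le _ k)
    have h2 : r * (n - 1) + r = r * n := by rw [← Nat.mul_succ]; congr 1; omega
    rw [mul_assoc]; omega
  refine sq_le_four_mul_of_le (X := r * (k + 1) * n) (by omega) ?_ (by nlinarith)
  calc 2 * k * (k + 1) = 2 * (k + 1) * k := by ring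
    _ ≤ r * (k + 1) * n := by gcongr

theorem stmt10 (k r n : ℕ) (hk : 2 ≤ k) (hr : 2 ≤ r) (hn : k ≤ n) :
    sizeRamsey k r (hPath k (k - 1) n) ≤ (r * (k + 1) * n / 2).choose k ∧
      ((r * (k + 1) * n / 2).choose k : ℝ) ≤
        (Real.exp 1 * r * (k + 1) * n / (2 * k)) ^ k := by
  have : NeZero k := ⟨by omega⟩
  constructor
  · calc sizeRamsey k r (hPath k (k - 1) n)
        ≤ #(TightPath.completePartite k (r * k * ((n - 1) / k) + 1)) :=
          sizeRamsey_le (TightPath.isUniform_completePartite _ _)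
            (TightPath.arrows_completePartite r hn le_rfl)
      _ = (r * k * ((n - 1) / k) + 1) ^ k := TightPath.card_completePartite _ _
      _ ≤ _ := Nat.pow_le_choose_of_sq_le (sq_le_four_mul_half_mul (by omega) hr hn)
  · have hN : ((r * (k + 1) * n / 2 : ℕ) : ℝ) ≤ ((r * (k + 1) * n : ℕ) : ℝ) / 2 :=
      Nat.cast_div_le
    calc ((r * (k + 1) * n / 2).choose k : ℝ)
        ≤ (Real.exp 1 * ((r * (k + 1) * n / 2 : ℕ) : ℝ) / k) ^ k :=
          Nat.choose_le_exp_mul_div_pow _ k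
      _ ≤ (Real.exp 1 * (((r * (k + 1) * n : ℕ) : ℝ) / 2) / k) ^ k := by gcongr
      _ = (Real.exp 1 * r * (k + 1) * n / (2 * k)) ^ k := by push_cast; ring
end
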